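/- Let G be a connected graph on n vertices that contains a cycle, and let G' be the graph obtained by subdividing every edge of G once. Then G' has a matching covering all of the original n vertices; in particular MM(G') ≥ n. -/

import Mathlib

variable {V : Type*}

/-- `M` is a matching in `G`: a finite set of edges of `G` that are pairwise non-incident. -/
def IsMatchingSet (G : SimpleGraph V) (M : Finset (Sym2 V)) : Prop :=
  (∀ e ∈ M, e ∈ G.edgeSet) ∧
  ∀ e ∈ M, ∀ f ∈ M, e ≠ f → ∀ v : V, v ∈ e → v ∉ f

/-- `M` is an induced matching in `G`: a matching such that no edge of `G`
joins two distinct edges of `M`. -/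
def IsInducedMatchingSet (G : SimpleGraph V) (M : Finset (Sym2 V)) : Prop :=
  IsMatchingSet G M ∧
  ∀ e ∈ M, ∀ f ∈ M, e ≠ f → ∀ a ∈ e, ∀ b ∈ f, ¬ G.Adj a b

/-- `S` is an independent set in `G`. -/
def IsIndepFinset (G : SimpleGraph V) (S : Finset V) : Prop :=
  ∀ a ∈ S, ∀ b ∈ S, ¬ G.Adj a b

/-- Maximum matching size `MM(G)`. -/
noncomputable def MMn (G : SimpleGraph V) : ℕ :=
  sSup {n | ∃ M : Finset (Sym2 V), IsMatchingSet G M ∧ M.card = n}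

/-- Maximum induced matching size `IM(G)`. -/
noncomputable def IMn (G : SimpleGraph V) : ℕ :=
  sSup {n | ∃ M : Finset (Sym2 V), IsInducedMatchingSet G M ∧ M.card = n}

/-- Maximum independent set size `IS(G)`. -/
noncomputable def ISn (G : SimpleGraph V) : ℕ :=
  sSup {n | ∃ S : Finset V, IsIndepFinset G S ∧ S.card = n}

/-- Base adjacency of the subdivision (incidence) graph of `G`: an original
vertex is adjacent to an edge-vertex iff it is an endpoint of that edge. -/
def IncAdj (G : SimpleGraph V) : (V ⊕ G.edgeSet) → (V ⊕ G.edgeSet) → Prop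
  | Sum.inl v, Sum.inr e => v ∈ (e : Sym2 V)
  | _, _ => False

/-- The subdivision of `G` (every edge subdivided once), realized as the
incidence bipartite graph on `V(G) ⊕ E(G)`. -/
def Subdivision (G : SimpleGraph V) : SimpleGraph (V ⊕ G.edgeSet) :=
  SimpleGraph.fromRel (IncAdj G)

/-!
Remove from `G` an edge `xy` lying on a cycle; the rest stays connected. Sending every vertex
`v ≠ x` to the first edge of a shortest path from `v` to `x` in `G - xy`, and `x` to `xy`,
is an injective choice of an incident edge for every vertex, i.e. a matching of the
subdivision covering `V(G)`.
-/

open Function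

namespace SimpleGraph

variable {G : SimpleGraph V}

lemma Connected.exists_adj_dist_lt (hG : G.Connected) {v x : V} (hv : v ≠ x) :
    ∃ u, G.Adj v u ∧ G.dist u x < G.dist v x := by
  obtain ⟨p, hp⟩ := hG.exists_walk_length_eq_dist v x
  cases p with
  | nil => exact absurd rfl hv
  | @cons _ u _ huv q =>
    refine ⟨u, huv, (dist_le q).trans_lt ?_⟩
    rw [← hp, Walk.length_cons]
    exact Nat.lt_succ_self _

lemma Connected.exists_injOn_compl_singleton_incidenceSet (hG : G.Connected) (x : V) :
    ∃ F : V → Sym2 V, Set.InjOn F {x}ᶜ ∧ ∀ v ≠ x, F v ∈ G.incidenceSet v := by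
  have hparent : ∀ v, ∃ u, v ≠ x → G.Adj v u ∧ G.dist u x < G.dist v x := fun v ↦
    (em (v = x)).elim (fun hv ↦ ⟨v, fun h ↦ absurd hv h⟩)
      fun hv ↦ (hG.exists_adj_dist_lt hv).imp fun _ h _ ↦ h
  choose p hp using hparent
  refine ⟨fun v ↦ s(v, p v), fun v hv w hw hvw ↦ ?_,
    fun v hv ↦ ⟨(hp v hv).1, Sym2.mem_mk_left _ _⟩⟩
  -- two vertices sent to the same edge would each be strictly closer to `x` than the other
  rcases Sym2.eq_iff.mp hvw with ⟨h, -⟩ | ⟨hvp, hpw⟩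
  · exact h
  · have hv' := (hp v hv).2
    have hw' := (hp w hw).2
    rw [hpw] at hv'
    rw [← hvp] at hw'
    exact absurd (hv'.trans hw') (lt_irrefl _)

lemma Connected.exists_injective_incidentEdge_of_not_isAcyclic (hG : G.Connected) (hcyc : ¬G.IsAcyclic) :
    ∃ F : V → G.edgeSet, Injective F ∧ ∀ v, v ∈ (F v : Sym2 V) := by
  classical
  obtain ⟨x, y, hxy, hbridge⟩ : ∃ x y, G.Adj x y ∧ ¬G.IsBridge s(x, y) := by
    simpa [isAcyclic_iff_forall_adj_isBridge] using hcyc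
  obtain ⟨F, hFinj, hFmem⟩ :=
    (hG.connected_delete_edge_of_not_isBridge hbridge).exists_injOn_compl_singleton_incidenceSet x
  have hFxy : ∀ v ≠ x, F v ≠ s(x, y) := fun v hv h ↦ by
    simpa [h] using (hFmem v hv).1
  let F' := update F x s(x, y)
  have hF'mem : ∀ v, F' v ∈ G.incidenceSet v := by
    intro v
    by_cases hv : v = x
    · subst hv
      simpa [F'] using hxy
    · have := hFmem v hv
      simp only [F', update_of_ne hv]
      exact ⟨edgeSet_mono (deleteEdges_le _) this.1, this.2⟩
  have hF'inj : Injective F' := by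
    have hinj : Set.InjOn F' {x}ᶜ := hFinj.congr fun v hv ↦ (update_of_ne hv _ _).symm
    rw [← Set.injOn_univ, show Set.univ = insert x {x}ᶜ by ext; simp [em],
      Set.injOn_insert (by simp)]
    refine ⟨hinj, ?_⟩
    rintro ⟨v, hv, h⟩
    simp only [F', update_self, update_of_ne hv] at h
    exact hFxy v hv h
  exact ⟨fun v ↦ ⟨F' v, (hF'mem v).1⟩, fun v w h ↦ hF'inj (congrArg Subtype.val h),
    fun v ↦ (hF'mem v).2⟩

end SimpleGraph

section Subdivision

variable {G : SimpleGraph V}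

lemma subdivision_adj_inl_inr {v : V} {e : G.edgeSet} :
    (Subdivision G).Adj (.inl v) (.inr e) ↔ v ∈ (e : Sym2 V) := by
  simp [Subdivision, IncAdj]

lemma injective_mk_inl_inr {W : Type*} (F : V → W) :
    Injective fun v ↦ s((.inl v : V ⊕ W), .inr (F v)) := by
  intro v w h
  have : v = w ∧ F v = F w := by simpa using h
  exact this.1

lemma isMatchingSet_subdivision_image [Fintype V] [DecidableEq (V ⊕ G.edgeSet)]
    {F : V → G.edgeSet} (hF : Injective F) (hmem : ∀ v, v ∈ (F v : Sym2 V)) :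
    IsMatchingSet (Subdivision G)
      (Finset.univ.image fun v ↦ s((.inl v : V ⊕ G.edgeSet), .inr (F v))) := by
  refine ⟨?_, ?_⟩
  · simp only [Finset.mem_image, Finset.mem_univ, true_and]
    rintro _ ⟨v, rfl⟩
    exact subdivision_adj_inl_inr.mpr (hmem v)
  · simp only [Finset.mem_image, Finset.mem_univ, true_and]
    rintro _ ⟨v, rfl⟩ _ ⟨w, rfl⟩ hvw z hzv hzw
    apply hvw
    rcases Sym2.mem_iff.mp hzv with rfl | rfl
    · simp_all
    · simp_all [hF.eq_iff]

end Subdivision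

lemma IsMatchingSet.card_le_MMn {W : Type*} [Finite W] {H : SimpleGraph W}
    {M : Finset (Sym2 W)} (hM : IsMatchingSet H M) : M.card ≤ MMn H := by
  classical
  have := Fintype.ofFinite W
  refine le_csSup ⟨Fintype.card (Sym2 W), ?_⟩ ⟨M, hM, rfl⟩
  rintro _ ⟨M', -, rfl⟩
  exact Finset.card_le_univ M'

/-- If `G` is connected and contains a cycle, then its subdivision has a matching
covering all original vertices; in particular `MM(G') ≥ |V(G)|`. -/
theorem stmt_17 {V : Type*} [Fintype V] (G : SimpleGraph V)
    (hconn : G.Connected) (hcyc : ¬ G.IsAcyclic) :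
    (∃ M : Finset (Sym2 (V ⊕ G.edgeSet)), IsMatchingSet (Subdivision G) M ∧
      ∀ v : V, ∃ e ∈ M, (Sum.inl v : V ⊕ G.edgeSet) ∈ e) ∧
    Fintype.card V ≤ MMn (Subdivision G) := by
  classical
  obtain ⟨F, hFinj, hFmem⟩ := hconn.exists_injective_incidentEdge_of_not_isAcyclic hcyc
  have hM := isMatchingSet_subdivision_image hFinj hFmem
  refine ⟨⟨_, hM, fun v ↦ ⟨_, Finset.mem_image_of_mem _ (Finset.mem_univ v),
    Sym2.mem_mk_left _ _⟩⟩, ?_⟩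
  simpa [Finset.card_image_of_injective _ (injective_mk_inl_inr F)] using hM.card_le_MMn
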